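/- Let f : |P| → |Q| be a weak morphism of precubical sets that is a homeomorphism, and A ⊆ Q a precubical subset. If no element of c(A) is broken in A, then A = f(c(A)). -/

import Mathlib

/-- A graded set with boundary operators: the data of a precubical set.
`cell` is the set of all cubes, `deg` the degree, and `d b i x` the face
`dᵢᵇ x`, meaningful for `1 ≤ i ≤ deg x` (`b = false` is `d⁰`, `b = true` is `d¹`). -/
structure PrecubicalSet where
  cell : Type
  deg : cell → ℕ
  d : Bool → ℕ → cell → cell

/-- `P` is a genuine precubical set: faces lower degree by one and the
precubical relations `dᵢᵏ ∘ dⱼˡ = dⱼ₋₁ˡ ∘ dᵢᵏ` hold for `i < j`. -/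
def PrecubicalSet.IsPrecubical (P : PrecubicalSet) : Prop :=
  (∀ (b : Bool) (i : ℕ) (x : P.cell), 1 ≤ i → i ≤ P.deg x →
      P.deg (P.d b i x) = P.deg x - 1) ∧
  (∀ (b b' : Bool) (i j : ℕ) (x : P.cell), 1 ≤ i → i < j → j ≤ P.deg x →
      P.d b i (P.d b' j x) = P.d b' (j - 1) (P.d b i x))

/-- A precubical subset: a graded subset stable under the boundary operators. -/
def PrecubicalSet.IsSub (P : PrecubicalSet) (X : Set P.cell) : Prop :=
  ∀ (b : Bool) (i : ℕ) (x : P.cell), 1 ≤ i → i ≤ P.deg x → x ∈ X → P.d b i x ∈ X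

/-- A morphism of precubical sets: a degree-preserving map commuting with the
boundary operators (on their meaningful range of indices). -/
structure PrecubicalHom (P Q : PrecubicalSet) where
  map : P.cell → Q.cell
  deg_map : ∀ x, Q.deg (map x) = P.deg x
  d_map : ∀ (b : Bool) (i : ℕ) (x : P.cell), 1 ≤ i → i ≤ P.deg x →
    map (P.d b i x) = Q.d b i (map x)
open CategoryTheory

noncomputable section
open scoped Classical DirectSum

instance (P : PrecubicalSet) : TopologicalSpace P.cell := ⊥

namespace PrecubicalSet

variable (P : PrecubicalSet)

/-- The disjoint union `⨿ₙ Pₙ × [0,1]ⁿ` (cells carry the discrete topology). -/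
def ESpace : Type := Σ x : P.cell, Fin (P.deg x) → unitInterval

instance : TopologicalSpace P.ESpace := by unfold ESpace; infer_instance

/-- The map `δᵢᵇ : [0,1]^m → [0,1]^{m+1}` inserting the coordinate `b` at
position `i` (1-based). -/
def insCoord {m : ℕ} (b : Bool) (i : ℕ) (u : Fin m → unitInterval) :
    Fin (m + 1) → unitInterval :=
  fun j =>
    if (j : ℕ) + 1 < i then (if h : (j : ℕ) < m then u ⟨j, h⟩ else 0)
    else if (j : ℕ) + 1 = i then (if b then 1 else 0)
    else if h : (j : ℕ) - 1 < m then u ⟨(j : ℕ) - 1, h⟩ else 0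

/-- The gluing relation of the geometric realisation:
`(dᵢᵇ x, u) ∼ (x, δᵢᵇ u)`. -/
def RelE : P.ESpace → P.ESpace → Prop := fun a z =>
  ∃ (b : Bool) (i : ℕ), 1 ≤ i ∧ i ≤ P.deg z.1 ∧ a.1 = P.d b i z.1 ∧
    HEq (insCoord b i a.2) z.2

/-- The geometric realisation `|P|` of a precubical set. -/
def GeomReal : Type := Quot P.RelE

instance : TopologicalSpace P.GeomReal := by unfold GeomReal; infer_instance

/-- The point `[x, u]` of `|P|`. -/
def pt (x : P.cell) (u : Fin (P.deg x) → unitInterval) : P.GeomReal :=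
  Quot.mk _ ⟨x, u⟩

end PrecubicalSet

namespace PrecubicalSet

/-- The midpoint `½ ∈ [0,1]`. -/
def half : unitInterval := ⟨1/2, by norm_num⟩

/-- The degree of a cell of the grid: a grid cell assigns to each of the `n`
coordinates either a vertex `j` (`(j, false)`) or an edge `[j, j+1]`
(`(j, true)`); the degree is the number of edge coordinates. -/
def gridDeg {n : ℕ} (c : Fin n → ℕ × Bool) : ℕ :=
  (Finset.univ.filter fun i => (c i).2 = true).card

/-- The boundary operator of the grid: `dₘᵇ` replaces the `m`-th edge
coordinate `[j, j+1]` by the vertex `j` (`b = false`) or `j+1` (`b = true`). -/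
def gridD {n : ℕ} (b : Bool) (m : ℕ) (c : Fin n → ℕ × Bool) : Fin n → ℕ × Bool :=
  fun i =>
    if (c i).2 = true ∧
        (Finset.univ.filter fun i' => (c i').2 = true ∧ i' < i).card + 1 = m
    then ((c i).1 + (if b then 1 else 0), false) else c i

/-- The precubical set `⟦0,k₁⟧ ⊗ ⋯ ⊗ ⟦0,kₙ⟧`. -/
def BoxData {n : ℕ} (k : Fin n → ℕ) : PrecubicalSet where
  cell := {c : Fin n → ℕ × Bool // ∀ i, (c i).1 + (if (c i).2 then 1 else 0) ≤ k i}
  deg := fun c => gridDeg c.1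
  d := fun b m c => ⟨gridD b m c.1, by
    intro i
    dsimp only [gridD]
    split
    · rename_i h
      have h2 := c.2 i
      rw [h.1] at h2
      simp only [if_true] at h2
      cases b <;> simp <;> omega
    · exact c.2 i⟩

/-- The cell of the box `⟦0,k₁⟧ ⊗ ⋯ ⊗ ⟦0,kₙ⟧` in whose relatively open
realisation a point `t ∈ [0,k₁] × ⋯ × [0,kₙ]` lies. -/
noncomputable def cellOf {n : ℕ} (k : Fin n → ℕ)
    (t : ∀ i, Set.Icc (0:ℝ) (k i : ℝ)) : (BoxData k).cell :=
  ⟨fun i => if ((t i : ℝ) = (⌊(t i : ℝ)⌋ : ℤ))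
      then ((⌊(t i : ℝ)⌋).toNat, false) else ((⌊(t i : ℝ)⌋).toNat, true), by
    intro i
    have h1 : ⌊(t i : ℝ)⌋ ≤ (k i : ℤ) := by
      have := Int.floor_mono (t i).2.2
      simpa using this
    have h0 : 0 ≤ ⌊(t i : ℝ)⌋ := Int.floor_nonneg.mpr (t i).2.1
    dsimp only
    split
    · simp only [Bool.false_eq_true, if_false, add_zero]
      omega
    · rename_i h
      have h2 : (t i : ℝ) < (k i : ℝ) := by
        rcases lt_or_eq_of_le (t i).2.2 with h' | h'
        · exact h'
        · exact absurd (by rw [h']; exact_mod_cast (Int.floor_natCast (k i)).symm) h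
      have h3 : ⌊(t i : ℝ)⌋ < (k i : ℤ) := by
        rw [Int.floor_lt]
        exact_mod_cast h2
      simp only [if_true]
      omega⟩

/-- The coordinates of `t` inside the open cell of `cellOf k t`: the fractional
parts of the edge coordinates, in order. -/
noncomputable def uOf {n : ℕ} (k : Fin n → ℕ)
    (t : ∀ i, Set.Icc (0:ℝ) (k i : ℝ)) :
    Fin ((BoxData k).deg (cellOf k t)) → unitInterval :=
  fun m =>
    ⟨Int.fract ((t ((((Finset.univ.filter
          fun i => (((cellOf k t).1 i).2 = true)).orderIsoOfFin rfl) m : _) : Fin n)) : ℝ),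
      Int.fract_nonneg _, (Int.fract_lt_one _).le⟩

variable {P Q : PrecubicalSet}

/-- The image of the point of `|⟦0,k₁⟧ ⊗ ⋯ ⊗ ⟦0,kₙ⟧| = [0,k₁] × ⋯ × [0,kₙ]`
with coordinates `t` under the geometric realisation `|ξ|` of a morphism of
precubical sets `ξ : ⟦0,k₁⟧ ⊗ ⋯ ⊗ ⟦0,kₙ⟧ → P`. -/
noncomputable def realBox {n : ℕ} {k : Fin n → ℕ}
    (ξ : PrecubicalHom (BoxData k) P) (t : ∀ i, Set.Icc (0:ℝ) (k i : ℝ)) :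
    P.GeomReal :=
  P.pt (ξ.map (cellOf k t)) (uOf k t ∘ Fin.cast (ξ.deg_map _))

/-- `f : |P| → |Q|` is a weak morphism of precubical sets: it sends vertices to
vertices, and for every morphism of precubical sets
`ξ : ⟦0,k₁⟧ ⊗ ⋯ ⊗ ⟦0,kₙ⟧ → P` there are a morphism of precubical sets
`χ : ⟦0,l₁⟧ ⊗ ⋯ ⊗ ⟦0,lₙ⟧ → Q` and a dihomeomorphism
`φ : [0,k₁] × ⋯ × [0,kₙ] → [0,l₁] × ⋯ × [0,lₙ]` with `f ∘ |ξ| = |χ| ∘ φ`. -/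
def IsWeakMorphism (f : P.GeomReal → Q.GeomReal) : Prop :=
  (∀ v : P.cell, P.deg v = 0 →
      ∃ w : Q.cell, Q.deg w = 0 ∧
        f (P.pt v fun _ => half) = Q.pt w fun _ => half) ∧
  ∀ (n : ℕ) (k : Fin n → ℕ), (∀ i, 1 ≤ k i) →
    ∀ ξ : PrecubicalHom (BoxData k) P,
      ∃ (l : Fin n → ℕ), (∀ i, 1 ≤ l i) ∧
        ∃ (χ : PrecubicalHom (BoxData l) Q)
          (φ : (∀ i, Set.Icc (0:ℝ) (k i : ℝ)) ≃ₜ (∀ i, Set.Icc (0:ℝ) (l i : ℝ))),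
          (∀ s t, s ≤ t ↔ φ s ≤ φ t) ∧
          ∀ t, f (realBox ξ t) = realBox χ (φ t)

/-- `p ∈ P` is the carrier of `a ∈ Q` with respect to `f : |P| → |Q|`: there is
`u` in the open cube with `f([p,u]) = [a,(½,…,½)]`.  (For a weak morphism that
is a homeomorphism, the carrier of `a` exists and is unique.) -/
def IsCarrier (f : P.GeomReal → Q.GeomReal) (p : P.cell) (a : Q.cell) : Prop :=
  ∃ u : Fin (P.deg p) → unitInterval,
    (∀ j, (u j : ℝ) ∈ Set.Ioo (0:ℝ) 1) ∧
    f (P.pt p u) = Q.pt a fun _ => half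

/-- The precubical subset `x♯(⟦0,1⟧^{⊗ deg x})` generated by a cube `x`:
all iterated faces of `x`. -/
def gen (P : PrecubicalSet) (x : P.cell) : Set P.cell :=
  {y | Relation.ReflTransGen
    (fun a c => ∃ (b : Bool) (i : ℕ), 1 ≤ i ∧ i ≤ P.deg c ∧ a = P.d b i c) y x}

/-- The subset `|X| ⊆ |P|` determined by a precubical subset `X ⊆ P`. -/
def geomSet (P : PrecubicalSet) (X : Set P.cell) : Set P.GeomReal :=
  {z | ∃ x ∈ X, ∃ u, z = P.pt x u}

/-- The carrier `c(A) = ⋃_{a ∈ A} c(a)♯(⟦0,1⟧^{⊗ deg c(a)})` of a precubical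
subset `A ⊆ Q`, where `c` is the carrier function of `f`. -/
def carrierSet (c : Q.cell → P.cell) (A : Set Q.cell) : Set P.cell :=
  {p | ∃ a ∈ A, p ∈ P.gen (c a)}

/-- `z` is a top cube of `S`: `z ∈ S` and `z` is not a proper iterated face of
any element of `S`. -/
def TopCube (P : PrecubicalSet) (S : Set P.cell) (z : P.cell) : Prop :=
  z ∈ S ∧ ∀ x ∈ S, P.deg z < P.deg x → z ∉ P.gen x

/-- An `n`-cube `x ∈ P` is broken in the precubical subset `A ⊆ Q` (with
respect to `f` with carrier function `c`): `x ∈ c(A)` and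
`f(x♯(⟦0,1⟧^{⊗n})) ⊄ A` (on geometric realisations). -/
def Broken (f : P.GeomReal → Q.GeomReal) (c : Q.cell → P.cell)
    (A : Set Q.cell) (x : P.cell) : Prop :=
  x ∈ carrierSet c A ∧ ¬ (f '' P.geomSet (P.gen x) ⊆ Q.geomSet A)

end PrecubicalSet

/-!
A point `[y, w]` with `w` in the open cube lies in `|X|` for a precubical subset `X` only
if `y ∈ X`: reading the gluing relation `(dᵢᵇ x, u) ∼ (x, δᵢᵇ u)` from right to left
(deleting a boundary coordinate) gives a rewriting system with the one-step diamond
property, whose normal forms include the points with all coordinates in `(0,1)`. So every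
representative `(x, u)` of `[y, w]` rewrites to `(y, w)`, which makes `y` an iterated face
of `x`. Applied to the centres `[a, (½,…,½)] = f([c(a), u])`, this gives `A ⊆ f(c(A))`;
conversely, if no cube of `c(A)` is broken then `f(|c(A)|) ⊆ |A|`, which gives
`f(c(A)) ⊆ A`.
-/

namespace PrecubicalSet

/-- Coordinate tuples are compared as sequences padded with zeros, which avoids casts between
`Fin` types of propositionally equal lengths. -/
def pad {m : ℕ} (u : Fin m → unitInterval) : ℕ → unitInterval :=
  fun j => if h : j < m then u ⟨j, h⟩ else 0

def endpoint (b : Bool) : unitInterval := if b then 1 else 0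

/-- `insCoord` on padded sequences (positions are 1-based). -/
def insertAt (b : Bool) (i : ℕ) (g : ℕ → unitInterval) : ℕ → unitInterval :=
  fun p => if p + 1 < i then g p else if p + 1 = i then endpoint b else g (p - 1)

def deleteAt (i : ℕ) (g : ℕ → unitInterval) : ℕ → unitInterval :=
  fun p => if p + 1 < i then g p else g (p + 1)

lemma endpoint_injective : Function.Injective endpoint := by
  intro b₁ b₂ h
  cases b₁ <;> cases b₂ <;> simp_all [endpoint]

lemma endpoint_notMem_Ioo (b : Bool) : ((endpoint b : unitInterval) : ℝ) ∉ Set.Ioo 0 1 := by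
  cases b <;> simp [endpoint]

lemma half_mem_Ioo : ((half : unitInterval) : ℝ) ∈ Set.Ioo 0 1 := by
  constructor <;> norm_num [half]

lemma pad_of_le {m : ℕ} (u : Fin m → unitInterval) {j : ℕ} (h : m ≤ j) : pad u j = 0 :=
  dif_neg (by omega)

lemma pad_injective {m : ℕ} : Function.Injective (pad (m := m)) := by
  intro u u' h
  funext q
  simpa [pad] using congrFun h q

lemma heq_iff_pad_eq {m m' : ℕ} (h : m = m') (u : Fin m → unitInterval)
    (u' : Fin m' → unitInterval) : HEq u u' ↔ pad u = pad u' := by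
  subst h
  rw [heq_iff_eq, pad_injective.eq_iff]

lemma pad_restrict {m : ℕ} (g : ℕ → unitInterval) (hg : ∀ p, m ≤ p → g p = 0) :
    pad (fun q : Fin m => g q) = g := by
  funext p
  by_cases hp : p < m
  · exact dif_pos hp
  · rw [pad_of_le _ (by omega), hg p (by omega)]

lemma pad_insCoord {m : ℕ} (b : Bool) {i : ℕ} (hi : i ≤ m + 1) (u : Fin m → unitInterval) :
    pad (insCoord b i u) = insertAt b i (pad u) := by
  funext p
  by_cases hp : p < m + 1
  · exact dif_pos hp
  · rw [pad_of_le _ (by omega), insertAt, if_neg (by omega), if_neg (by omega),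
      pad_of_le _ (by omega)]

lemma deleteAt_of_lt {i p : ℕ} (g : ℕ → unitInterval) (hp : p + 1 < i) :
    deleteAt i g p = g p :=
  if_pos hp

lemma deleteAt_of_le {i p : ℕ} (g : ℕ → unitInterval) (hp : i ≤ p + 1) :
    deleteAt i g p = g (p + 1) :=
  if_neg (by omega)

lemma eq_insertAt_iff {b : Bool} {i : ℕ} (hi : 1 ≤ i) {g h : ℕ → unitInterval} :
    h = insertAt b i g ↔ h (i - 1) = endpoint b ∧ deleteAt i h = g := by
  constructor
  · rintro rfl
    refine ⟨by rw [insertAt, if_neg (by omega), if_pos (by omega)], ?_⟩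
    funext p
    by_cases hp : p + 1 < i
    · rw [deleteAt_of_lt _ hp, insertAt, if_pos hp]
    · rw [deleteAt_of_le _ (by omega), insertAt, if_neg (by omega), if_neg (by omega),
        Nat.add_sub_cancel]
  · rintro ⟨hb, rfl⟩
    funext p
    rcases lt_trichotomy (p + 1) i with hp | rfl | hp
    · rw [insertAt, if_pos hp, deleteAt_of_lt _ hp]
    · rwa [insertAt, if_neg (by omega), if_pos rfl]
    · rw [insertAt, if_neg (by omega), if_neg (by omega), deleteAt_of_le _ (by omega),
        Nat.sub_add_cancel (by omega)]

lemma deleteAt_pad_of_le {m i p : ℕ} (u : Fin m → unitInterval) (hi : i ≤ m)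
    (hp : m ≤ p + 1) : deleteAt i (pad u) p = 0 := by
  rw [deleteAt_of_le _ (by omega), pad_of_le _ hp]

lemma deleteAt_deleteAt {i j : ℕ} (hij : i < j) (g : ℕ → unitInterval) :
    deleteAt (j - 1) (deleteAt i g) = deleteAt i (deleteAt j g) := by
  funext p
  simp only [deleteAt]
  split_ifs <;> first | rfl | omega

variable {R : PrecubicalSet}

lemma ext_of_pad_eq {s t : R.ESpace} (h : s.1 = t.1) (hp : pad s.2 = pad t.2) : s = t :=
  Sigma.ext h ((heq_iff_pad_eq (congrArg R.deg h) _ _).2 hp)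

lemma relE_iff (hR : R.IsPrecubical) {a z : R.ESpace} :
    R.RelE a z ↔ ∃ (b : Bool) (i : ℕ), 1 ≤ i ∧ i ≤ R.deg z.1 ∧ a.1 = R.d b i z.1 ∧
      pad z.2 (i - 1) = endpoint b ∧ deleteAt i (pad z.2) = pad a.2 := by
  refine exists₂_congr fun b i => and_congr_right fun hi => and_congr_right fun hiz =>
    and_congr_right fun ha => ?_
  have hdeg : R.deg a.1 + 1 = R.deg z.1 := by
    rw [ha, hR.1 b i z.1 hi hiz]
    omega
  rw [heq_iff_pad_eq hdeg, pad_insCoord b (by omega), eq_comm, eq_insertAt_iff hi]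

lemma not_relE_of_mem_Ioo (hR : R.IsPrecubical) {y : R.cell}
    {w : Fin (R.deg y) → unitInterval} (hw : ∀ q, (w q : ℝ) ∈ Set.Ioo 0 1) (s : R.ESpace) :
    ¬ R.RelE s ⟨y, w⟩ := by
  intro h
  obtain ⟨b, i, hi, hiy, -, hb, -⟩ := (relE_iff hR).1 h
  have hlt : i - 1 < R.deg y := by simp only at hiy; omega
  have hwi : w ⟨i - 1, hlt⟩ = endpoint b := (dif_pos hlt).symm.trans hb
  exact endpoint_notMem_Ioo b (hwi ▸ hw _)

lemma exists_relE_relE_of_lt (hR : R.IsPrecubical) {z s₁ s₂ : R.ESpace}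
    {b₁ b₂ : Bool} {i j : ℕ} (hi : 1 ≤ i) (hij : i < j) (hj : j ≤ R.deg z.1)
    (hs₁ : s₁.1 = R.d b₁ i z.1) (hb₁ : pad z.2 (i - 1) = endpoint b₁)
    (hu₁ : deleteAt i (pad z.2) = pad s₁.2)
    (hs₂ : s₂.1 = R.d b₂ j z.1) (hb₂ : pad z.2 (j - 1) = endpoint b₂)
    (hu₂ : deleteAt j (pad z.2) = pad s₂.2) :
    ∃ t, R.RelE t s₁ ∧ R.RelE t s₂ := by
  have hdeg₁ : R.deg s₁.1 = R.deg z.1 - 1 := by rw [hs₁, hR.1 b₁ i z.1 hi (by omega)]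
  have hdeg₂ : R.deg s₂.1 = R.deg z.1 - 1 := by rw [hs₂, hR.1 b₂ j z.1 (by omega) hj]
  have hdeg : R.deg (R.d b₁ i s₂.1) = R.deg z.1 - 2 := by
    rw [hR.1 b₁ i s₂.1 hi (by omega)]
    omega
  obtain ⟨w, hw_def⟩ : ∃ w, w = deleteAt i (pad s₂.2) := ⟨_, rfl⟩
  have hw : pad (fun q : Fin (R.deg (R.d b₁ i s₂.1)) => w q) = w :=
    pad_restrict w fun p hp => hw_def ▸ deleteAt_pad_of_le _ (by omega) (by omega)
  refine ⟨⟨R.d b₁ i s₂.1, fun q => w q⟩, (relE_iff hR).2 ?_, (relE_iff hR).2 ?_⟩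
  · refine ⟨b₂, j - 1, by omega, by omega, ?_, ?_, ?_⟩
    · rw [hs₁, hs₂, hR.2 b₁ b₂ i j z.1 hi hij hj]
    · rw [← hu₁, deleteAt_of_le _ (by omega), show j - 1 - 1 + 1 = j - 1 by omega, hb₂]
    · rw [hw, hw_def, ← hu₁, ← hu₂, deleteAt_deleteAt hij]
  · refine ⟨b₁, i, hi, by omega, rfl, ?_, (hw.trans hw_def).symm⟩
    rw [← hu₂, deleteAt_of_lt _ (by omega), hb₁]

lemma relE_diamond (hR : R.IsPrecubical) {z s₁ s₂ : R.ESpace}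
    (h₁ : R.RelE s₁ z) (h₂ : R.RelE s₂ z) : s₁ = s₂ ∨ ∃ t, R.RelE t s₁ ∧ R.RelE t s₂ := by
  obtain ⟨b₁, i, hi, hiz, hs₁, hb₁, hu₁⟩ := (relE_iff hR).1 h₁
  obtain ⟨b₂, j, hj, hjz, hs₂, hb₂, hu₂⟩ := (relE_iff hR).1 h₂
  rcases lt_trichotomy i j with hij | rfl | hji
  · exact .inr (exists_relE_relE_of_lt hR hi hij hjz hs₁ hb₁ hu₁ hs₂ hb₂ hu₂)
  · obtain rfl : b₁ = b₂ := endpoint_injective (hb₁.symm.trans hb₂)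
    exact .inl (ext_of_pad_eq (hs₁.trans hs₂.symm) (hu₁.symm.trans hu₂))
  · obtain ⟨t, ht₂, ht₁⟩ := exists_relE_relE_of_lt hR hj hji hiz hs₂ hb₂ hu₂ hs₁ hb₁ hu₁
    exact .inr ⟨t, ht₁, ht₂⟩

lemma reflTransGen_relE_of_relE (hR : R.IsPrecubical) {y : R.cell}
    {w : Fin (R.deg y) → unitInterval} (hw : ∀ q, (w q : ℝ) ∈ Set.Ioo 0 1) {s t : R.ESpace}
    (ht : Relation.ReflTransGen R.RelE ⟨y, w⟩ t) (hs : R.RelE s t) :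
    Relation.ReflTransGen R.RelE ⟨y, w⟩ s := by
  induction ht generalizing s with
  | refl => exact absurd hs (not_relE_of_mem_Ioo hR hw s)
  | tail _ hstep ih =>
      rcases relE_diamond hR hstep hs with rfl | ⟨r, hr, hrs⟩
      · assumption
      · exact (ih hr).tail hrs

lemma reflTransGen_relE_of_pt_eq (hR : R.IsPrecubical) {y x : R.cell}
    {w : Fin (R.deg y) → unitInterval} (hw : ∀ q, (w q : ℝ) ∈ Set.Ioo 0 1)
    {u : Fin (R.deg x) → unitInterval} (h : R.pt y w = R.pt x u) :
    Relation.ReflTransGen R.RelE ⟨y, w⟩ ⟨x, u⟩ := by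
  have key : ∀ {s t : R.ESpace}, Relation.EqvGen R.RelE s t →
      (Relation.ReflTransGen R.RelE ⟨y, w⟩ s ↔ Relation.ReflTransGen R.RelE ⟨y, w⟩ t) := by
    intro s t hst
    induction hst with
    | rel _ _ hst => exact ⟨fun h => h.tail hst, fun h => reflTransGen_relE_of_relE hR hw h hst⟩
    | refl => exact Iff.rfl
    | symm _ _ _ ih => exact ih.symm
    | trans _ _ _ _ _ ih₁ ih₂ => exact ih₁.trans ih₂
  exact (key (Quot.eq.mp h)).1 .refl

lemma mem_gen_of_reflTransGen_relE {s t : R.ESpace} (h : Relation.ReflTransGen R.RelE s t) :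
    s.1 ∈ R.gen t.1 :=
  h.lift Sigma.fst fun _ _ ⟨b, i, hi, hiz, ha, _⟩ => ⟨b, i, hi, hiz, ha⟩

lemma gen_subset_of_mem {X : Set R.cell} (hX : R.IsSub X) {x : R.cell} (hx : x ∈ X) :
    R.gen x ⊆ X := by
  intro y hy
  induction hy using Relation.ReflTransGen.head_induction_on with
  | refl => exact hx
  | head hface _ ih =>
      obtain ⟨b, i, hi, hiz, rfl⟩ := hface
      exact hX b i _ hi hiz ih

lemma mem_of_pt_mem_geomSet (hR : R.IsPrecubical) {X : Set R.cell} (hX : R.IsSub X)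
    {y : R.cell} {w : Fin (R.deg y) → unitInterval} (hw : ∀ q, (w q : ℝ) ∈ Set.Ioo 0 1)
    (h : R.pt y w ∈ R.geomSet X) : y ∈ X := by
  obtain ⟨x, hx, u, hxu⟩ := h
  exact gen_subset_of_mem hX hx
    (mem_gen_of_reflTransGen_relE (reflTransGen_relE_of_pt_eq hR hw hxu))

lemma image_geomSet_carrierSet_subset {P Q : PrecubicalSet} {f : P.GeomReal → Q.GeomReal}
    {c : Q.cell → P.cell} {A : Set Q.cell} (hnb : ∀ x ∈ carrierSet c A, ¬ Broken f c A x) :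
    f '' P.geomSet (carrierSet c A) ⊆ Q.geomSet A := by
  rintro _ ⟨_, ⟨p, ⟨a, ha, hp⟩, u, rfl⟩, rfl⟩
  have hca : c a ∈ carrierSet c A := ⟨a, ha, .refl⟩
  have hsub : f '' P.geomSet (P.gen (c a)) ⊆ Q.geomSet A :=
    not_not.mp fun h => hnb _ hca ⟨hca, h⟩
  exact hsub ⟨_, ⟨p, hp, u, rfl⟩, rfl⟩

end PrecubicalSet

open PrecubicalSet in
theorem eq_image_carrier_of_not_broken_general (P Q : PrecubicalSet)
    (hQ : Q.IsPrecubical)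
    (f : P.GeomReal ≃ₜ Q.GeomReal)
    (c : Q.cell → P.cell) (hc : ∀ a, IsCarrier (P := P) (Q := Q) f (c a) a)
    (A : Set Q.cell) (hA : Q.IsSub A)
    (hnb : ∀ x ∈ carrierSet c A, ¬ Broken (P := P) (Q := Q) f c A x)
    (B : Set Q.cell) (hB : Q.IsSub B)
    (hBim : f '' P.geomSet (carrierSet c A) = Q.geomSet B) :
    A = B := by
  apply Set.Subset.antisymm
  · intro a ha
    obtain ⟨u, -, hfu⟩ := hc a
    refine mem_of_pt_mem_geomSet hQ hB (fun _ => half_mem_Ioo) ?_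
    rw [← hBim, ← hfu]
    exact Set.mem_image_of_mem f ⟨c a, ⟨a, ha, .refl⟩, u, rfl⟩
  · intro b hb
    refine mem_of_pt_mem_geomSet hQ hA (fun _ => half_mem_Ioo)
      (image_geomSet_carrierSet_subset hnb ?_)
    rw [hBim]
    exact ⟨b, hb, _, rfl⟩

open PrecubicalSet in
/-- Let `f : |P| → |Q|` be a weak morphism of precubical sets
that is a homeomorphism, with carrier function `c`, and let `A ⊆ Q` be a
precubical subset. If no element of `c(A)` is broken in `A`, then `A = f(c(A))`
(where the image precubical subset `f(c(A))` is given by `B`, the unique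
precubical subset with `f(|c(A)|) = |B|`). -/
theorem eq_image_carrier_of_not_broken (P Q : PrecubicalSet)
    (hP : P.IsPrecubical) (hQ : Q.IsPrecubical)
    (f : P.GeomReal ≃ₜ Q.GeomReal) (hf : IsWeakMorphism (P := P) (Q := Q) f)
    (c : Q.cell → P.cell) (hc : ∀ a, IsCarrier (P := P) (Q := Q) f (c a) a)
    (A : Set Q.cell) (hA : Q.IsSub A)
    (hnb : ∀ x ∈ carrierSet c A, ¬ Broken (P := P) (Q := Q) f c A x)
    (B : Set Q.cell) (hB : Q.IsSub B)
    (hBim : f '' P.geomSet (carrierSet c A) = Q.geomSet B) :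
    A = B :=
  eq_image_carrier_of_not_broken_general P Q hQ f c hc A hA hnb B hB hBim
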